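/- For consecutive indices i, i+1 ∈ [n-1], the composition p_i ∘ p_{i+1} of polyurethane toggles has order dividing 6: (p_i ∘ p_{i+1})^6 is the identity on S_n. -/

import Mathlib

/-!
Only the entries `i, i+1, i+2` ever move, and they keep occupying the same three positions of the
word. A word of the orbit is therefore `L.map (relabel i g)` for a fixed word `L` in which
`i, i+1, i+2` appear from left to right and a permutation `g` of the three slots. Whether `p i` or
`p (i+1)` fires depends only on `g` and on two bits: is there an entry larger than `i+2` between
the first and second slot, and between the second and third. This reduces `p i ∘ p (i+1)` to a
map on `S₃` indexed by four choices of bits, whose sixth iterate is the identity by computation.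
-/

/-- `l` is a permutation of `{1, …, n}`, written as a word. -/
def IsPermList (n : ℕ) (l : List ℕ) : Prop := l.Perm (List.range' 1 n)

/-- The word obtained from `l` by exchanging the positions of the entries `i` and `i+1`. -/
def swapEntries (i : ℕ) (l : List ℕ) : List ℕ :=
  l.map fun x => if x = i then i + 1 else if x = i + 1 then i else x

/-- Some entry larger than `i+1` appears (strictly) between the entries `i` and `i+1`
in the word `l`. -/
def ToggleApplies (i : ℕ) (l : List ℕ) : Prop :=
  ∃ a ∈ l, i + 1 < a ∧
    min (l.idxOf i) (l.idxOf (i + 1)) < l.idxOf a ∧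
    l.idxOf a < max (l.idxOf i) (l.idxOf (i + 1))

open scoped Classical in
/-- The polyurethane toggle `p i`. -/
noncomputable def toggle (i : ℕ) (l : List ℕ) : List ℕ :=
  if ToggleApplies i l then swapEntries i l else l

open Equiv

theorem List.idxOf_map_of_injective {α β : Type*} [BEq α] [LawfulBEq α] [BEq β] [LawfulBEq β]
    {f : α → β} (hf : Function.Injective f) (l : List α) (a : α) :
    (l.map f).idxOf (f a) = l.idxOf a := by
  induction l with
  | nil => rfl
  | cons b l ih => by_cases h : b = a <;> simp [h, hf.ne, ih]

theorem Equiv.Perm.extendDomain_swap {α β : Type*} [DecidableEq α] [DecidableEq β]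
    {p : β → Prop} [DecidablePred p] (f : α ≃ Subtype p) (a b : α) :
    (swap a b).extendDomain f = swap (f a : β) (f b) := by
  ext x
  by_cases hx : p x
  · obtain ⟨c, rfl⟩ : ∃ c, (f c : β) = x := ⟨f.symm ⟨x, hx⟩, by simp⟩
    simp only [Perm.extendDomain_apply_image, swap_apply_def, Subtype.coe_inj,
      f.injective.eq_iff]
    split_ifs <;> rfl
  · have hne : ∀ c, (f c : β) ≠ x := fun c h => hx (h ▸ (f c).2)
    rw [Perm.extendDomain_apply_not_subtype _ _ hx, swap_apply_of_ne_of_ne (hne a).symm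
      (hne b).symm]

theorem swapEntries_eq_map_swap (k : ℕ) (l : List ℕ) :
    swapEntries k l = l.map (swap k (k + 1)) :=
  rfl

def blockEquiv (i k : ℕ) : Fin k ≃ {x : ℕ // i ≤ x ∧ x < i + k} where
  toFun j := ⟨i + j, by omega⟩
  invFun x := ⟨x - i, by omega⟩
  left_inv j := by ext; simp
  right_inv x := by ext; simp only; omega

def relabel (i : ℕ) {k : ℕ} (g : Perm (Fin k)) : Perm ℕ := g.extendDomain (blockEquiv i k)

section relabel

variable {i k : ℕ}

theorem relabel_apply_add (g : Perm (Fin k)) (j : Fin k) : relabel i g (i + j) = i + g j :=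
  Perm.extendDomain_apply_image g (blockEquiv i k) j

theorem relabel_apply_of_le (g : Perm (Fin k)) {x : ℕ} (hx : i + k ≤ x) : relabel i g x = x :=
  Perm.extendDomain_apply_not_subtype g _ (by omega)

theorem relabel_mul (g h : Perm (Fin k)) : relabel i (g * h) = relabel i g * relabel i h :=
  (Perm.extendDomain_mul _ g h).symm

theorem relabel_swap (a b : Fin k) : relabel i (swap a b) = swap (i + a) (i + b) :=
  Perm.extendDomain_swap _ a b

theorem relabel_one : relabel i (1 : Perm (Fin k)) = 1 := Perm.extendDomain_one _

theorem idxOf_map_relabel_add (L : List ℕ) (g : Perm (Fin k)) (j : Fin k) :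
    (L.map (relabel i g)).idxOf (i + j) = L.idxOf (i + (g⁻¹ j : Fin k)) := by
  have h : i + (j : ℕ) = relabel i g (i + (g⁻¹ j : Fin k)) := by
    rw [relabel_apply_add, Perm.coe_inv, apply_symm_apply]
  rw [h, List.idxOf_map_of_injective (relabel i g).injective]

theorem mem_map_relabel_of_le (L : List ℕ) (g : Perm (Fin k)) {a : ℕ} (ha : i + k ≤ a) :
    a ∈ L.map (relabel i g) ↔ a ∈ L := by
  conv_lhs => rw [← relabel_apply_of_le g ha]
  exact List.mem_map_of_injective (relabel i g).injective

theorem idxOf_map_relabel_of_le (L : List ℕ) (g : Perm (Fin k)) {a : ℕ}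
    (ha : i + k ≤ a) : (L.map (relabel i g)).idxOf a = L.idxOf a := by
  conv_lhs => rw [← relabel_apply_of_le g ha]
  exact List.idxOf_map_of_injective (relabel i g).injective L a

theorem swapEntries_map_relabel (L : List ℕ) (g : Perm (Fin k)) (a b : Fin k)
    (hab : (b : ℕ) = a + 1) :
    swapEntries (i + a) (L.map (relabel i g)) = L.map (relabel i (swap a b * g)) := by
  rw [swapEntries_eq_map_swap, List.map_map, relabel_mul, relabel_swap, hab, add_assoc]
  rfl

theorem exists_eq_map_relabel {l : List ℕ} (h : ∀ j : Fin k, i + ↑j ∈ l) :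
    ∃ (L : List ℕ) (g : Perm (Fin k)), l = L.map (relabel i g) ∧ (∀ j : Fin k, i + ↑j ∈ L) ∧
      StrictMono fun j : Fin k => L.idxOf (i + ↑j) := by
  set P := fun j : Fin k => l.idxOf (i + ↑j)
  have hP : Function.Injective P := fun a b hab =>
    Fin.ext (by have := (List.idxOf_inj (h a)).1 hab; omega)
  set σ := Tuple.sort P
  refine ⟨l.map (relabel i σ⁻¹), σ, ?_, fun j => ?_, ?_⟩
  · rw [List.map_map, ← Perm.coe_mul, ← relabel_mul, mul_inv_cancel, relabel_one, Perm.coe_one,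
      List.map_id]
  · have hj : i + (j : ℕ) = relabel i σ⁻¹ (i + ↑(σ j)) := by
      rw [relabel_apply_add, Perm.coe_inv, symm_apply_apply]
    exact hj ▸ List.mem_map_of_mem (h _)
  · simp only [idxOf_map_relabel_add, inv_inv]
    exact (Tuple.monotone_sort P).strictMono_of_injective (hP.comp σ.injective)

end relabel

theorem StrictMono.min_lt_lt_max_iff {α β : Type*} [LinearOrder α] [LinearOrder β] {f : α → β}
    (hf : StrictMono f) (a b c : α) :
    (min (f a) (f b) < f c ∧ f c < max (f a) (f b)) ↔ (min a b < c ∧ c < max a b) := by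
  rw [← hf.monotone.map_min, ← hf.monotone.map_max, hf.lt_iff_lt, hf.lt_iff_lt]

def LargeEntryBetween (i : ℕ) (L : List ℕ) (x y : ℕ) : Prop :=
  ∃ a ∈ L, i + 2 < a ∧ min x y < L.idxOf a ∧ L.idxOf a < max x y

theorem largeEntryBetween_comm {i : ℕ} {L : List ℕ} {x y : ℕ} :
    LargeEntryBetween i L x y ↔ LargeEntryBetween i L y x := by
  simp only [LargeEntryBetween, min_comm, max_comm]

theorem largeEntryBetween_iff_or {i : ℕ} {L : List ℕ} {x y z : ℕ} (hxy : x < y) (hyz : y < z)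
    (hy : ∀ a ∈ L, i + 2 < a → L.idxOf a ≠ y) :
    LargeEntryBetween i L x z ↔ LargeEntryBetween i L x y ∨ LargeEntryBetween i L y z := by
  simp only [LargeEntryBetween, min_eq_left hxy.le, max_eq_right hxy.le, min_eq_left hyz.le,
    max_eq_right hyz.le, min_eq_left (hxy.trans hyz).le, max_eq_right (hxy.trans hyz).le]
  constructor
  · rintro ⟨a, ha, hlarge, hx, hz⟩
    rcases (hy a ha hlarge).lt_or_gt with h | h
    · exact .inl ⟨a, ha, hlarge, hx, h⟩
    · exact .inr ⟨a, ha, hlarge, h, hz⟩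
  · rintro (⟨a, ha, hlarge, hx, hz⟩ | ⟨a, ha, hlarge, hx, hz⟩) <;>
      exact ⟨a, ha, hlarge, by omega, by omega⟩

/-! A state `g` says that the `j`-th leftmost of the three positions occupied by `i, i+1, i+2`
holds `i + g j`; the bits `q₁`, `q₂` say whether an entry larger than `i + 2` lies between the
first and second, resp. the second and third, of these positions. -/

namespace ToggleModel

def spansLarge (q₁ q₂ : Bool) (a b : Fin 3) : Bool :=
  (q₁ && decide (min a b < 1 ∧ 1 ≤ max a b)) || (q₂ && decide (min a b < 2 ∧ 2 ≤ max a b))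

def toggleHigh (q₁ q₂ : Bool) (g : Perm (Fin 3)) : Perm (Fin 3) :=
  if spansLarge q₁ q₂ (g⁻¹ 1) (g⁻¹ 2) then swap 1 2 * g else g

def toggleLow (q₁ q₂ : Bool) (g : Perm (Fin 3)) : Perm (Fin 3) :=
  if spansLarge q₁ q₂ (g⁻¹ 0) (g⁻¹ 1) ∨
      (min (g⁻¹ 0) (g⁻¹ 1) < g⁻¹ 2 ∧ g⁻¹ 2 < max (g⁻¹ 0) (g⁻¹ 1)) then swap 0 1 * g else g

set_option maxRecDepth 10000 in
theorem toggleLow_comp_toggleHigh_iterate_six (q₁ q₂ : Bool) (g : Perm (Fin 3)) :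
    (toggleLow q₁ q₂ ∘ toggleHigh q₁ q₂)^[6] g = g := by
  revert q₁ q₂ g
  decide

end ToggleModel

section simulation

open ToggleModel

variable {i : ℕ} {L : List ℕ}

theorem largeEntryBetween_iff_spansLarge {P : Fin 3 → ℕ} (hP : StrictMono P)
    (hP₁ : P 1 = L.idxOf (i + 1)) {q₁ q₂ : Bool}
    (hq₁ : q₁ = true ↔ LargeEntryBetween i L (P 0) (P 1))
    (hq₂ : q₂ = true ↔ LargeEntryBetween i L (P 1) (P 2)) {a b : Fin 3} (hab : a ≠ b) :
    LargeEntryBetween i L (P a) (P b) ↔ spansLarge q₁ q₂ a b = true := by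
  wlog h : a < b generalizing a b
  · rw [largeEntryBetween_comm, this hab.symm (hab.lt_or_gt.resolve_left h)]
    simp only [spansLarge, min_comm, max_comm]
  have hlarge : ∀ a ∈ L, i + 2 < a → L.idxOf a ≠ P 1 := fun a ha hlarge h => by
    rw [hP₁, List.idxOf_inj ha] at h
    omega
  obtain ⟨rfl, rfl⟩ | ⟨rfl, rfl⟩ | ⟨rfl, rfl⟩ :
      a = 0 ∧ b = 1 ∨ a = 0 ∧ b = 2 ∨ a = 1 ∧ b = 2 := by
    revert a b; decide
  · exact hq₁.symm.trans (by cases q₁ <;> cases q₂ <;> decide)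
  · rw [largeEntryBetween_iff_or (hP (by decide)) (hP (by decide)) hlarge, ← hq₁, ← hq₂]
    cases q₁ <;> cases q₂ <;> decide
  · exact hq₂.symm.trans (by cases q₁ <;> cases q₂ <;> decide)

theorem toggleApplies_succ_map_relabel (g : Perm (Fin 3)) :
    ToggleApplies (i + 1) (L.map (relabel i g)) ↔
      LargeEntryBetween i L (L.idxOf (i + ↑(g⁻¹ 1))) (L.idxOf (i + ↑(g⁻¹ 2))) := by
  have h₁ : (L.map (relabel i g)).idxOf (i + 1) = L.idxOf (i + ↑(g⁻¹ 1)) :=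
    idxOf_map_relabel_add L g 1
  have h₂ : (L.map (relabel i g)).idxOf (i + 1 + 1) = L.idxOf (i + ↑(g⁻¹ 2)) :=
    idxOf_map_relabel_add L g 2
  simp only [ToggleApplies, LargeEntryBetween, h₁, h₂]
  refine exists_congr fun a => ?_
  by_cases ha : i + 3 ≤ a
  · rw [mem_map_relabel_of_le L g ha, idxOf_map_relabel_of_le L g ha]
  · omega

theorem toggleApplies_map_relabel (hL : ∀ j : Fin 3, i + ↑j ∈ L) (g : Perm (Fin 3)) :
    ToggleApplies i (L.map (relabel i g)) ↔
      LargeEntryBetween i L (L.idxOf (i + ↑(g⁻¹ 0))) (L.idxOf (i + ↑(g⁻¹ 1))) ∨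
        (min (L.idxOf (i + ↑(g⁻¹ 0))) (L.idxOf (i + ↑(g⁻¹ 1))) < L.idxOf (i + ↑(g⁻¹ 2)) ∧
          L.idxOf (i + ↑(g⁻¹ 2)) < max (L.idxOf (i + ↑(g⁻¹ 0))) (L.idxOf (i + ↑(g⁻¹ 1)))) := by
  have h₀ : (L.map (relabel i g)).idxOf i = L.idxOf (i + ↑(g⁻¹ 0)) :=
    idxOf_map_relabel_add L g 0
  have h₁ : (L.map (relabel i g)).idxOf (i + 1) = L.idxOf (i + ↑(g⁻¹ 1)) :=
    idxOf_map_relabel_add L g 1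
  have h₂ : (L.map (relabel i g)).idxOf (i + 2) = L.idxOf (i + ↑(g⁻¹ 2)) :=
    idxOf_map_relabel_add L g 2
  have hmem₂ : i + 2 ∈ L.map (relabel i g) := by
    refine List.mem_map.2 ⟨_, hL (g⁻¹ 2), ?_⟩
    rw [relabel_apply_add, Perm.coe_inv, apply_symm_apply]
    rfl
  simp only [ToggleApplies, LargeEntryBetween, h₀, h₁]
  constructor
  · rintro ⟨a, ha, hlarge, hlt⟩
    rcases (show a = i + 2 ∨ i + 3 ≤ a by omega) with rfl | ha₃
    · exact .inr (h₂ ▸ hlt)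
    · rw [mem_map_relabel_of_le L g ha₃] at ha
      rw [idxOf_map_relabel_of_le L g ha₃] at hlt
      exact .inl ⟨a, ha, by omega, hlt⟩
  · rintro (⟨a, ha, hlarge, hlt⟩ | hlt)
    · have ha₃ : i + 3 ≤ a := hlarge
      exact ⟨a, (mem_map_relabel_of_le L g ha₃).2 ha, by omega,
        idxOf_map_relabel_of_le L g ha₃ ▸ hlt⟩
    · exact ⟨i + 2, hmem₂, by omega, h₂ ▸ hlt⟩

variable (hL : ∀ j : Fin 3, i + ↑j ∈ L) (hP : StrictMono fun j : Fin 3 => L.idxOf (i + ↑j))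
  {q₁ q₂ : Bool}
  (hq₁ : q₁ = true ↔
    LargeEntryBetween i L (L.idxOf (i + ↑(0 : Fin 3))) (L.idxOf (i + ↑(1 : Fin 3))))
  (hq₂ : q₂ = true ↔
    LargeEntryBetween i L (L.idxOf (i + ↑(1 : Fin 3))) (L.idxOf (i + ↑(2 : Fin 3))))
include hP hq₁ hq₂

theorem toggle_succ_map_relabel (g : Perm (Fin 3)) :
    toggle (i + 1) (L.map (relabel i g)) = L.map (relabel i (toggleHigh q₁ q₂ g)) := by
  have h := (toggleApplies_succ_map_relabel g).trans
    (largeEntryBetween_iff_spansLarge hP rfl hq₁ hq₂ (g⁻¹.injective.ne (by decide)))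
  simp only [toggle, toggleHigh, h]
  split_ifs
  · exact swapEntries_map_relabel L g 1 2 rfl
  · rfl

include hL in
theorem toggle_map_relabel (g : Perm (Fin 3)) :
    toggle i (L.map (relabel i g)) = L.map (relabel i (toggleLow q₁ q₂ g)) := by
  have h := (toggleApplies_map_relabel hL g).trans <| or_congr
    (largeEntryBetween_iff_spansLarge hP rfl hq₁ hq₂ (g⁻¹.injective.ne (by decide)))
    (hP.min_lt_lt_max_iff _ _ _)
  simp only [toggle, toggleLow, h]
  split_ifs
  · exact swapEntries_map_relabel L g 0 1 rfl
  · rfl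

end simulation

/-- For consecutive indices `i, i+1 ∈ [n-1]`, the composition `p i ∘ p (i+1)` has order
dividing 6 on `Sₙ`. -/
theorem toggle_comp_order_dvd_six (n i : ℕ) (hi₁ : 1 ≤ i) (hi₂ : i + 1 ≤ n - 1)
    (l : List ℕ) (hl : IsPermList n l) :
    (fun x => toggle i (toggle (i + 1) x))^[6] l = l := by
  classical
  have hmem : ∀ j : Fin 3, i + ↑j ∈ l := fun j => hl.mem_iff.2 (List.mem_range'_1.2 (by omega))
  obtain ⟨L, g, rfl, hL, hP⟩ := exists_eq_map_relabel hmem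
  obtain ⟨q₁, hq₁⟩ : ∃ q : Bool, q = true ↔
      LargeEntryBetween i L (L.idxOf (i + ↑(0 : Fin 3))) (L.idxOf (i + ↑(1 : Fin 3))) :=
    ⟨_, decide_eq_true_iff⟩
  obtain ⟨q₂, hq₂⟩ : ∃ q : Bool, q = true ↔
      LargeEntryBetween i L (L.idxOf (i + ↑(1 : Fin 3))) (L.idxOf (i + ↑(2 : Fin 3))) :=
    ⟨_, decide_eq_true_iff⟩
  have hsemiconj : Function.Semiconj (fun g => L.map (relabel i g))
      (ToggleModel.toggleLow q₁ q₂ ∘ ToggleModel.toggleHigh q₁ q₂)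
      (fun x => toggle i (toggle (i + 1) x)) := fun g => by
    simp only [Function.comp_apply, toggle_succ_map_relabel hP hq₁ hq₂,
      toggle_map_relabel hL hP hq₁ hq₂]
  rw [← hsemiconj.iterate_right 6 g, ToggleModel.toggleLow_comp_toggleHigh_iterate_six]
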